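/- Let P be a finite p-group and Q a normal subgroup of P. For any subgroup R of P, if the intersection N_P(R) ∩ Q is contained in R, then Q is contained in R. -/

import Mathlib

/-!
Nilpotent groups satisfy the normalizer condition, so if `Q ≰ R` then `R` is properly contained
in its normalizer inside `R ⊔ Q = R * Q`. By Dedekind's modular law that normalizer is
`R * (N_P(R) ∩ Q)`, which the hypothesis squeezes back into `R`.
-/

open scoped Pointwise

namespace Subgroup

variable {G : Type*} [Group G]

theorem lt_normalizer_inf_of_lt [Group.IsNilpotent G] {H K : Subgroup G} (hHK : H < K) :
    H < normalizer (H : Set G) ⊓ K := by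
  have hlt : H.subgroupOf K < ⊤ := by
    rw [lt_top_iff_ne_top, Ne, subgroupOf_eq_top]
    exact hHK.not_ge
  have key := Group.normalizerCondition_of_isNilpotent _ hlt
  rw [← subgroupOf_normalizer_eq hHK.le,
    ← map_lt_map_iff_of_injective (f := K.subtype) K.subtype_injective,
    subgroupOf_map_subtype, subgroupOf_map_subtype, inf_eq_left.mpr hHK.le] at key
  exact key

theorem normalizer_inf_sup_le_sup_normalizer_inf (R Q : Subgroup G) [Q.Normal] :
    normalizer (R : Set G) ⊓ (R ⊔ Q) ≤ R ⊔ normalizer (R : Set G) ⊓ Q := by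
  intro x hx
  have hx' : x ∈ (R : Set G) * ↑(Q ⊓ normalizer (R : Set G)) := by
    rw [mul_inf_assoc R Q _ le_normalizer, ← mul_normal]
    exact ⟨hx.2, hx.1⟩
  obtain ⟨r, hr, q, ⟨hqQ, hqN⟩, rfl⟩ := hx'
  exact mul_mem_sup hr ⟨hqN, hqQ⟩

end Subgroup

/-- Let `P` be a finite `p`-group, `Q ⊴ P` and `R ≤ P`. If `N_P(R) ∩ Q ≤ R`, then
`Q ≤ R`. -/
theorem le_of_normalizer_inf_le {p : ℕ} [Fact p.Prime] {P : Type*} [Group P] [Finite P]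
    (hP : IsPGroup p P) (Q : Subgroup P) (hQ : Q.Normal) (R : Subgroup P)
    (h : Subgroup.normalizer (R : Set P) ⊓ Q ≤ R) : Q ≤ R := by
  have := hP.isNilpotent
  by_contra hQR
  have hlt : R < R := calc
    R < Subgroup.normalizer (R : Set P) ⊓ (R ⊔ Q) :=
      Subgroup.lt_normalizer_inf_of_lt (left_lt_sup.mpr hQR)
    _ ≤ R ⊔ Subgroup.normalizer (R : Set P) ⊓ Q :=
      Subgroup.normalizer_inf_sup_le_sup_normalizer_inf R Q
    _ ≤ R := sup_le le_rfl h
  exact hlt.false
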